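/- For f holomorphic from 𝔻 to 𝔻 and d ≥ 1, f is a Blaschke product of degree d if and only if for every w ∈ 𝔻 the hyperbolic difference quotient f*(·,w) is a Blaschke product of degree d−1, if and only if f*(·,w₀) is a Blaschke product of degree d−1 for some w₀ ∈ 𝔻. -/

import Mathlib

open Complex Filter Set Metric Finset

noncomputable section

/-- `f` is a holomorphic self-map of the open unit disk. -/
def HolSelfDisk (f : ℂ → ℂ) : Prop :=
  DifferentiableOn ℂ f (Metric.ball (0:ℂ) 1) ∧
    Set.MapsTo f (Metric.ball (0:ℂ) 1) (Metric.ball (0:ℂ) 1)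

/-- `B` is a finite Blaschke product of degree `d` (as a function on the unit disk). -/
def IsBlaschke (d : ℕ) (B : ℂ → ℂ) : Prop :=
  ∃ (θ : ℝ) (a : Fin d → ℂ), (∀ j, ‖a j‖ < 1) ∧
    ∀ z ∈ Metric.ball (0:ℂ) 1,
      B z = Complex.exp (θ * Complex.I) *
        ∏ j, (z - a j) / (1 - (starRingEnd ℂ) (a j) * z)

/-- The hyperbolic difference quotient `f*(z,w)`. -/
def hdq (f : ℂ → ℂ) (w : ℂ) (z : ℂ) : ℂ :=
  if z = w then
    deriv f z * ((1 - ‖z‖ ^ 2 : ℝ) : ℂ) / ((1 - ‖f z‖ ^ 2 : ℝ) : ℂ)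
  else
    ((f z - f w) / (1 - (starRingEnd ℂ) (f w) * f z)) /
      ((z - w) / (1 - (starRingEnd ℂ) w * z))

/-- Iterated hyperbolic difference quotient: `iterHdq f w h = Δ_{w (h-1), …, w 0} f`. -/
def iterHdq (f : ℂ → ℂ) (w : ℕ → ℂ) : ℕ → ℂ → ℂ
  | 0 => f
  | h + 1 => hdq (iterHdq f w h) (w h)

/-- The Stolz region of vertex `σ` and amplitude `M`. -/
def Stolz (σ : ℂ) (M : ℝ) : Set ℂ :=
  {z : ℂ | ‖z‖ < 1 ∧ ‖σ - z‖ / (1 - ‖z‖) < M}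

/-- `f` has non-tangential limit `c` at `σ`. -/
def NTLim (f : ℂ → ℂ) (σ c : ℂ) : Prop :=
  ∀ M : ℝ, 1 < M → Filter.Tendsto f (nhdsWithin σ (Stolz σ M)) (nhds c)

/-- The boundary dilation coefficient, as an extended real number. -/
def betaE (f : ℂ → ℂ) (σ : ℂ) : EReal :=
  Filter.liminf
    (fun z => (((1 - ‖f z‖) / (1 - ‖z‖) : ℝ) : EReal))
    (nhdsWithin σ (Metric.ball (0:ℂ) 1))

/-!
Everything rests on the identity `γ_w(z) f*(z,w) = γ_{f(w)}(f(z))` and two facts about finite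
Blaschke products: a product of degree `d + 1` vanishing at `w` is `γ_w` times one of degree `d`,
and post-composition with a disk automorphism `γ_a` preserves the degree. For the latter, clearing
denominators in `γ_a (c ∏ γ_{b_j})` leaves the numerator `c ∏ (z - b_j) - a ∏ (1 - b̄_j z)`, whose
`d` roots lie in the disk because `|1 - b̄ z| ≤ |z - b|` for `|z| ≥ 1`, while the denominator is `c`
times its conjugate reciprocal. On the diagonal, `f*(·,w)` is continuous at `w`, so it agrees with
the Blaschke product there too.
-/

open Polynomial Topology ComplexConjugate

/-- The disk automorphism `γ_a`. -/
def mobius (a z : ℂ) : ℂ := (z - a) / (1 - conj a * z)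

lemma normSq_one_sub_conj_mul_sub_normSq_sub (a z : ℂ) :
    normSq (1 - conj a * z) - normSq (z - a) = (1 - normSq a) * (1 - normSq z) := by
  simp only [normSq_apply, sub_re, sub_im, mul_re, mul_im, one_re, one_im, conj_re, conj_im]
  ring

lemma one_sub_conj_mul_ne_zero {a z : ℂ} (ha : ‖a‖ < 1) (hz : ‖z‖ ≤ 1) :
    1 - conj a * z ≠ 0 := by
  intro h
  have h1 : ‖conj a * z‖ = 1 := by rw [← sub_eq_zero.mp h, norm_one]
  rw [norm_mul, norm_conj] at h1
  nlinarith [norm_nonneg a, norm_nonneg z]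

lemma norm_one_sub_conj_mul_le_norm_sub {a z : ℂ} (ha : ‖a‖ < 1) (hz : 1 ≤ ‖z‖) :
    ‖1 - conj a * z‖ ≤ ‖z - a‖ := by
  have key := normSq_one_sub_conj_mul_sub_normSq_sub a z
  simp only [normSq_eq_norm_sq] at key
  have : (1 - ‖a‖ ^ 2) * (1 - ‖z‖ ^ 2) ≤ 0 :=
    mul_nonpos_of_nonneg_of_nonpos (by nlinarith [norm_nonneg a]) (by nlinarith)
  exact (sq_le_sq₀ (norm_nonneg _) (norm_nonneg _)).mp (by linarith)

lemma mobius_eq_zero_iff {a z : ℂ} (ha : ‖a‖ < 1) (hz : ‖z‖ ≤ 1) : mobius a z = 0 ↔ z = a := by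
  simp [mobius, one_sub_conj_mul_ne_zero ha hz, sub_eq_zero]

lemma mobius_neg_mobius {a z : ℂ} (ha : ‖a‖ < 1) (hz : ‖z‖ ≤ 1) :
    mobius (-a) (mobius a z) = z := by
  have hD := one_sub_conj_mul_ne_zero ha hz
  have ha2 : 1 - conj a * a ≠ 0 := one_sub_conj_mul_ne_zero ha ha.le
  unfold mobius
  rw [map_neg, sub_neg_eq_add, neg_mul, sub_neg_eq_add]
  have hnum : (z - a) / (1 - conj a * z) + a = z * (1 - conj a * a) / (1 - conj a * z) := by
    rw [div_add' _ _ _ hD]; congr 1; ring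
  have hden : 1 + conj a * ((z - a) / (1 - conj a * z)) = (1 - conj a * a) / (1 - conj a * z) := by
    rw [mul_div_assoc', one_add_div hD]; congr 1; ring
  rw [hnum, hden, div_div_div_cancel_right₀ hD, mul_div_cancel_right₀ _ ha2]

lemma continuousAt_mobius {a z : ℂ} (h : 1 - conj a * z ≠ 0) : ContinuousAt (mobius a) z := by
  unfold mobius; fun_prop (disch := exact h)

section

variable {d : ℕ}

def blaschke (c : ℂ) (a : Fin d → ℂ) (z : ℂ) : ℂ := c * ∏ j, mobius (a j) z

lemma isBlaschke_iff {B : ℂ → ℂ} :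
    IsBlaschke d B ↔ ∃ c : ℂ, ‖c‖ = 1 ∧ ∃ a : Fin d → ℂ,
      (∀ j, ‖a j‖ < 1) ∧ EqOn B (blaschke c a) (ball 0 1) := by
  constructor
  · rintro ⟨θ, a, ha, hB⟩
    exact ⟨_, norm_exp_ofReal_mul_I θ, a, ha, hB⟩
  · rintro ⟨c, hc, a, ha, hB⟩
    refine ⟨c.arg, a, ha, fun z hz => ?_⟩
    rw [hB hz, blaschke]
    conv_lhs => rw [← norm_mul_exp_arg_mul_I c, hc, ofReal_one, one_mul]
    rfl

lemma IsBlaschke.congr {B C : ℂ → ℂ} (hB : IsBlaschke d B)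
    (hBC : EqOn B C (ball 0 1)) : IsBlaschke d C := by
  obtain ⟨θ, a, ha, hB⟩ := hB
  exact ⟨θ, a, ha, fun z hz => hBC hz ▸ hB z hz⟩

lemma continuousAt_blaschke {c z : ℂ} {a : Fin d → ℂ} (ha : ∀ j, ‖a j‖ < 1)
    (hz : ‖z‖ ≤ 1) : ContinuousAt (blaschke c a) z := by
  unfold blaschke
  exact continuousAt_const.mul <| tendsto_finsetProd _ fun j _ ↦
    continuousAt_mobius (one_sub_conj_mul_ne_zero (ha j) hz)

lemma IsBlaschke.mobius_mul {B : ℂ → ℂ} {w : ℂ} (hB : IsBlaschke d B) (hw : ‖w‖ < 1) :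
    IsBlaschke (d + 1) (fun z ↦ mobius w z * B z) := by
  obtain ⟨c, hc, a, ha, hB⟩ := isBlaschke_iff.mp hB
  refine isBlaschke_iff.mpr ⟨c, hc, Fin.cons w a, Fin.cases hw ha, fun z hz ↦ ?_⟩
  simp only [hB hz, blaschke, Fin.prod_univ_succ, Fin.cons_zero, Fin.cons_succ]
  ring

lemma IsBlaschke.exists_eqOn_mobius_mul {B : ℂ → ℂ} {w : ℂ}
    (hB : IsBlaschke (d + 1) B) (hw : w ∈ ball (0 : ℂ) 1) (hBw : B w = 0) :
    ∃ c : ℂ, ‖c‖ = 1 ∧ ∃ a : Fin d → ℂ, (∀ j, ‖a j‖ < 1) ∧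
      EqOn B (fun z ↦ mobius w z * blaschke c a z) (ball 0 1) := by
  obtain ⟨c, hc, a, ha, hB⟩ := isBlaschke_iff.mp hB
  rw [mem_ball_zero_iff] at hw
  have hc0 : c ≠ 0 := norm_ne_zero_iff.mp (hc ▸ one_ne_zero)
  obtain ⟨k, -, hk⟩ : ∃ k ∈ Finset.univ, mobius (a k) w = 0 := by
    rw [← prod_eq_zero_iff, ← mul_eq_zero_iff_left hc0]
    exact (hB (mem_ball_zero_iff.mpr hw)).symm.trans hBw
  refine ⟨c, hc, fun j ↦ a (k.succAbove j), fun j ↦ ha _, fun z hz ↦ ?_⟩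
  rw [hB hz]
  unfold blaschke
  rw [Fin.prod_univ_succAbove _ k,
    ← (mobius_eq_zero_iff (ha k) hw.le).mp hk]
  ring

lemma Multiset.exists_fin_map_eq {α : Type*} (s : Multiset α) (hs : Multiset.card s = d) :
    ∃ e : Fin d → α, Finset.univ.val.map e = s := by
  obtain ⟨l, rfl⟩ := Quotient.exists_rep s
  obtain rfl : l.length = d := hs
  exact ⟨l.get, by rw [Fin.univ_val_map, List.ofFn_get]; rfl⟩

lemma Polynomial.exists_eval_eq_leadingCoeff_mul_prod {p : ℂ[X]} (hp : p.natDegree = d) :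
    ∃ e : Fin d → ℂ, ∀ z, p.eval z = p.leadingCoeff * ∏ j, (z - e j) := by
  obtain ⟨e, he⟩ := p.roots.exists_fin_map_eq (IsAlgClosed.card_roots_eq_natDegree.trans hp)
  refine ⟨e, fun z ↦ ?_⟩
  conv_lhs =>
    rw [← C_leadingCoeff_mul_prod_multiset_X_sub_C (p := p) IsAlgClosed.card_roots_eq_natDegree]
  rw [eval_mul, eval_C, eval_multiset_prod, ← he, Multiset.map_map, Multiset.map_map,
    Finset.prod_eq_multiset_prod]
  simp

/-- Numerator of `γ_a (c ∏ γ_{b j})` after clearing the denominator `∏ (1 - conj (b j) z)`. -/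
def mobiusBlaschkeNum (c a : ℂ) (b : Fin d → ℂ) : ℂ[X] :=
  C c * ∏ j, (X - C (b j)) - C a * ∏ j, (1 - C (conj (b j)) * X)

lemma eval_mobiusBlaschkeNum (c a : ℂ) (b : Fin d → ℂ) (z : ℂ) :
    (mobiusBlaschkeNum c a b).eval z = c * ∏ j, (z - b j) - a * ∏ j, (1 - conj (b j) * z) := by
  simp [mobiusBlaschkeNum, eval_prod]

lemma natDegree_mobiusBlaschkeNum {c a : ℂ} {b : Fin d → ℂ} (hc : ‖c‖ = 1) (ha : ‖a‖ < 1)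
    (hb : ∀ j, ‖b j‖ ≤ 1) : (mobiusBlaschkeNum c a b).natDegree = d := by
  have hQ : ∀ j ∈ Finset.univ, (1 - C (conj (b j)) * X).natDegree ≤ 1 := fun j _ ↦ by
    compute_degree
  have hQdeg : (∏ j, (1 - C (conj (b j)) * X)).natDegree ≤ d :=
    (natDegree_prod_le _ _).trans <| (Finset.sum_le_sum hQ).trans (by simp)
  have hQcoeff : (∏ j, (1 - C (conj (b j)) * X)).coeff d = ∏ j, -conj (b j) := by
    simpa [coeff_one] using coeff_prod_of_natDegree_le (s := Finset.univ) _ 1 hQ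
  have hPcoeff : (∏ j, (X - C (b j))).coeff d = 1 := by
    simpa using (monic_prod_X_sub_C b Finset.univ).coeff_natDegree
  have hlead : ‖a * ∏ j, -conj (b j)‖ < ‖c‖ := by
    rw [hc, norm_mul, norm_prod]
    calc ‖a‖ * ∏ j, ‖-conj (b j)‖ ≤ ‖a‖ * 1 := by
          gcongr
          exact Finset.prod_le_one (fun _ _ ↦ norm_nonneg _) fun j _ ↦ by simpa using hb j
      _ < 1 := by simpa using ha
  refine natDegree_eq_of_le_of_coeff_ne_zero ?_ ?_
  · refine (natDegree_sub_le _ _).trans (max_le ?_ ?_)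
    · exact (natDegree_C_mul_le _ _).trans (by simp)
    · exact (natDegree_C_mul_le _ _).trans hQdeg
  · rw [mobiusBlaschkeNum, coeff_sub, coeff_C_mul, coeff_C_mul, hPcoeff, hQcoeff, mul_one,
      sub_ne_zero]
    exact fun h ↦ hlead.ne (congrArg norm h).symm

lemma pow_mul_conj_prod (z : ℂ) (g : Fin d → ℂ) :
    z ^ d * conj (∏ j, g j) = ∏ j, z * conj (g j) := by
  rw [map_prod, Finset.prod_mul_distrib, Finset.prod_const, Finset.card_univ, Fintype.card_fin]

lemma mul_conj_inv_conj_sub {z : ℂ} (hz : z ≠ 0) (e : ℂ) :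
    z * conj ((conj z)⁻¹ - e) = 1 - conj e * z := by
  rw [map_sub, map_inv₀, conj_conj, mul_sub, mul_inv_cancel₀ hz, mul_comm]

lemma mul_conj_one_sub_conj_mul_inv_conj {z : ℂ} (hz : z ≠ 0) (b : ℂ) :
    z * conj (1 - conj b * (conj z)⁻¹) = z - b := by
  rw [map_sub, map_one, map_mul, map_inv₀, conj_conj, conj_conj, mul_sub, mul_one,
    mul_left_comm, mul_inv_cancel₀ hz, mul_one]

/-- Apply `p ↦ z ^ d * conj (p ((conj z)⁻¹))`, which exchanges `∏ (z - b j)` and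
`∏ (1 - conj (b j) * z)`, to both sides. -/
lemma conj_reverse_of_forall_eq {c a L : ℂ} {b e : Fin d → ℂ}
    (h : ∀ z, c * ∏ j, (z - b j) - a * ∏ j, (1 - conj (b j) * z) = L * ∏ j, (z - e j)) (z : ℂ) :
    conj c * ∏ j, (1 - conj (b j) * z) - conj a * ∏ j, (z - b j) =
      conj L * ∏ j, (1 - conj (e j) * z) := by
  revert z
  rw [← funext_iff]
  refine Continuous.ext_on (dense_compl_singleton 0) (by fun_prop) (by fun_prop) fun z hz ↦ ?_
  have hz : z ≠ 0 := hz
  have := congrArg (fun w ↦ z ^ d * conj w) (h (conj z)⁻¹)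
  rw [map_sub, mul_sub, map_mul, map_mul, map_mul, mul_left_comm _ (conj c),
    mul_left_comm _ (conj a), mul_left_comm _ (conj L), pow_mul_conj_prod, pow_mul_conj_prod,
    pow_mul_conj_prod] at this
  simpa only [mul_conj_inv_conj_sub hz, mul_conj_one_sub_conj_mul_inv_conj hz] using this

lemma eval_mobiusBlaschkeNum_ne_zero {c a z : ℂ} {b : Fin d → ℂ} (hc : ‖c‖ = 1)
    (ha : ‖a‖ < 1) (hb : ∀ j, ‖b j‖ < 1) (hz : 1 ≤ ‖z‖) :
    (mobiusBlaschkeNum c a b).eval z ≠ 0 := by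
  rw [eval_mobiusBlaschkeNum]
  have hP : 0 < ‖∏ j, (z - b j)‖ := norm_pos_iff.mpr <| Finset.prod_ne_zero_iff.mpr
    fun j _ ↦ sub_ne_zero.mpr fun h ↦ (hb j).not_ge (h ▸ hz)
  have hQP : ‖∏ j, (1 - conj (b j) * z)‖ ≤ ‖∏ j, (z - b j)‖ := by
    simp only [norm_prod]
    exact Finset.prod_le_prod (fun _ _ ↦ norm_nonneg _)
      fun j _ ↦ norm_one_sub_conj_mul_le_norm_sub (hb j) hz
  refine sub_ne_zero.mpr fun h ↦ ?_
  have := congrArg norm h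
  rw [norm_mul, norm_mul, hc, one_mul] at this
  nlinarith [norm_nonneg a]

lemma isBlaschke_mobius_comp_blaschke {c a : ℂ} {b : Fin d → ℂ} (hc : ‖c‖ = 1) (ha : ‖a‖ < 1)
    (hb : ∀ j, ‖b j‖ < 1) : IsBlaschke d (fun z ↦ mobius a (blaschke c b z)) := by
  obtain ⟨e, he⟩ := exists_eval_eq_leadingCoeff_mul_prod
    (natDegree_mobiusBlaschkeNum hc ha fun j ↦ (hb j).le)
  set L := (mobiusBlaschkeNum c a b).leadingCoeff
  have hR : ∀ z, c * ∏ j, (z - b j) - a * ∏ j, (1 - conj (b j) * z) = L * ∏ j, (z - e j) :=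
    fun z ↦ by rw [← eval_mobiusBlaschkeNum, he]
  have hL : L ≠ 0 := by
    intro hL
    exact eval_mobiusBlaschkeNum_ne_zero hc ha hb (z := 1) (by simp) (by rw [he, hL, zero_mul])
  have he_lt : ∀ j, ‖e j‖ < 1 := fun j ↦ by
    by_contra! hj
    refine eval_mobiusBlaschkeNum_ne_zero hc ha hb hj ?_
    rw [he, Finset.prod_eq_zero (Finset.mem_univ j) (sub_self _), mul_zero]
  have hrev := conj_reverse_of_forall_eq hR
  have hcc : conj c * c = 1 := by rw [conj_mul', hc]; norm_num
  refine isBlaschke_iff.mpr ⟨L / (c * conj L), by simp [hc, hL], e, he_lt, fun z hz ↦ ?_⟩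
  have hz : ‖z‖ ≤ 1 := (mem_ball_zero_iff.mp hz).le
  have hQ : ∏ j, (1 - conj (b j) * z) ≠ 0 :=
    Finset.prod_ne_zero_iff.mpr fun j _ ↦ one_sub_conj_mul_ne_zero (hb j) hz
  have hF : ∏ j, (1 - conj (e j) * z) ≠ 0 :=
    Finset.prod_ne_zero_iff.mpr fun j _ ↦ one_sub_conj_mul_ne_zero (he_lt j) hz
  have hden : ∏ j, (1 - conj (b j) * z) - conj a * c * ∏ j, (z - b j) =
      c * (conj L * ∏ j, (1 - conj (e j) * z)) := by
    rw [← hrev]; linear_combination (-∏ j, (1 - conj (b j) * z)) * hcc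
  simp only [blaschke, mobius, Finset.prod_div_distrib]
  have hnum := hR z
  generalize ∏ j, (z - b j) = P at hnum hden ⊢
  generalize ∏ j, (1 - conj (b j) * z) = Q at hQ hnum hden ⊢
  generalize ∏ j, (1 - conj (e j) * z) = F at hF hden ⊢
  rw [mul_div_assoc', div_sub' hQ, mul_div_assoc', one_sub_div hQ, div_div_div_cancel_right₀ hQ,
    mul_comm Q a, ← mul_assoc, hnum, hden]
  field_simp

lemma IsBlaschke.mobius_comp {B : ℂ → ℂ} {a : ℂ} (hB : IsBlaschke d B) (ha : ‖a‖ < 1) :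
    IsBlaschke d (fun z ↦ mobius a (B z)) := by
  obtain ⟨c, hc, b, hb, hB⟩ := isBlaschke_iff.mp hB
  exact (isBlaschke_mobius_comp_blaschke hc ha hb).congr fun z hz ↦ by simp only [hB hz]

end

lemma mobius_mul_hdq {f : ℂ → ℂ} {w z : ℂ} (hw : ‖w‖ < 1) (hz : ‖z‖ ≤ 1) :
    mobius w z * hdq f w z = mobius (f w) (f z) := by
  rcases eq_or_ne z w with rfl | hzw
  · simp [mobius]
  · rw [hdq, if_neg hzw]
    exact mul_div_cancel₀ _ ((mobius_eq_zero_iff hw hz).not.mpr hzw)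

lemma continuousAt_hdq_self {f : ℂ → ℂ} {w : ℂ} (hf : DifferentiableAt ℂ f w) (hfw : ‖f w‖ < 1) :
    ContinuousAt (hdq f w) w := by
  have hD : 1 - conj (f w) * f w ≠ 0 := one_sub_conj_mul_ne_zero hfw hfw.le
  have hlim : Tendsto (fun z ↦ slope f w z * (1 - conj w * z) / (1 - conj (f w) * f z)) (𝓝[≠] w)
      (𝓝 (deriv f w * (1 - conj w * w) / (1 - conj (f w) * f w))) := by
    refine ((hasDerivAt_iff_tendsto_slope.mp hf.hasDerivAt).mul ?_).div ?_ hD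
    · exact (continuousAt_const.sub (continuousAt_const.mul continuousAt_id)).tendsto.mono_left
        nhdsWithin_le_nhds
    · exact (continuousAt_const.sub (continuousAt_const.mul hf.continuousAt)).tendsto.mono_left
        nhdsWithin_le_nhds
  rw [continuousAt_iff_punctured_nhds]
  convert hlim.congr' ?_ using 2
  · simp only [hdq, if_pos, conj_mul']
    push_cast
    ring
  · filter_upwards [self_mem_nhdsWithin] with z (hzw : z ≠ w)
    rw [hdq, if_neg hzw, slope_def_field]
    field_simp

theorem isBlaschke_succ_iff_hdq {d : ℕ} {f : ℂ → ℂ} {w : ℂ} (hf : HolSelfDisk f)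
    (hw : w ∈ ball (0 : ℂ) 1) : IsBlaschke (d + 1) f ↔ IsBlaschke d (hdq f w) := by
  have hw' : ‖w‖ < 1 := mem_ball_zero_iff.mp hw
  have hfw : ‖f w‖ < 1 := mem_ball_zero_iff.mp (hf.2 hw)
  constructor
  · intro h
    obtain ⟨c, hc, a, ha, hfa⟩ :=
      (h.mobius_comp hfw).exists_eqOn_mobius_mul hw (by simp [mobius])
    have hoff : ∀ z ∈ ball (0 : ℂ) 1, z ≠ w → hdq f w z = blaschke c a z := fun z hz hzw ↦ by
      have hz' : ‖z‖ ≤ 1 := (mem_ball_zero_iff.mp hz).le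
      refine mul_left_cancel₀ ((mobius_eq_zero_iff hw' hz').not.mpr hzw) ?_
      rw [mobius_mul_hdq hw' hz']
      exact hfa hz
    refine isBlaschke_iff.mpr ⟨c, hc, a, ha, fun z hz ↦ ?_⟩
    rcases eq_or_ne z w with rfl | hzw
    · have hcont := continuousAt_hdq_self (hf.1.differentiableAt (isOpen_ball.mem_nhds hz)) hfw
      refine ((hcont.eventuallyEq_nhds_iff_eventuallyEq_nhdsNE
        (continuousAt_blaschke ha hw'.le)).mp ?_).eq_of_nhds
      filter_upwards [self_mem_nhdsWithin, nhdsWithin_le_nhds (isOpen_ball.mem_nhds hz)]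
        with x hxz hx using hoff x hx hxz
    · exact hoff z hz hzw
  · intro h
    have hγf : IsBlaschke (d + 1) (fun z ↦ mobius (f w) (f z)) :=
      (h.mobius_mul hw').congr fun z hz ↦ mobius_mul_hdq hw' (mem_ball_zero_iff.mp hz).le
    refine (hγf.mobius_comp (a := -f w) (by rwa [norm_neg])).congr fun z hz ↦ ?_
    exact mobius_neg_mobius hfw (mem_ball_zero_iff.mp (hf.2 hz)).le

/-- `f` is a Blaschke product of degree `d ≥ 1` iff every (iff some) hyperbolic
difference quotient `f*(·,w)` is a Blaschke product of degree `d - 1`. -/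
theorem stmt3 (f : ℂ → ℂ) (d : ℕ) (hd : 1 ≤ d) (hf : HolSelfDisk f) :
    (IsBlaschke d f ↔ ∀ w ∈ Metric.ball (0:ℂ) 1, IsBlaschke (d - 1) (hdq f w)) ∧
    (IsBlaschke d f ↔ ∃ w₀ ∈ Metric.ball (0:ℂ) 1, IsBlaschke (d - 1) (hdq f w₀)) := by
  obtain ⟨m, rfl⟩ := Nat.exists_eq_add_of_le' hd
  have h0 : (0 : ℂ) ∈ ball (0 : ℂ) 1 := mem_ball_self one_pos
  simp only [Nat.add_sub_cancel]
  exact ⟨⟨fun h w hw ↦ (isBlaschke_succ_iff_hdq hf hw).mp h,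
      fun h ↦ (isBlaschke_succ_iff_hdq hf h0).mpr (h 0 h0)⟩,
    ⟨fun h ↦ ⟨0, h0, (isBlaschke_succ_iff_hdq hf h0).mp h⟩,
      fun ⟨w, hw, h⟩ ↦ (isBlaschke_succ_iff_hdq hf hw).mpr h⟩⟩
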